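/- Under Condition on the energy landscape (unique stable state x₀, metastable set {x₁¹,...,x₁ⁿ, x₂} with H(x₂) > H(x₁ʳ), all H(x₁ʳ) equal, and Φ(x₁ʳ,x₁^q) - H(x₁ʳ) < Γ_m), the communication costs satisfy Φ(x₂,x₀) - H(x₂) = Φ(x₁ʳ,x₀) - H(x₁ʳ) = Γ_m for every r = 1,...,n. -/

import Mathlib

open Filter Topology
open scoped Classical

/-- Height along a path starting at `x` with subsequent states `l`. -/
def pathHeight {S : Type*} (H : S → ℝ) (Δ : S → S → ℝ) : S → List S → ℝ
  | x, [] => H x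
  | x, y :: l => max (H x + Δ x y) (pathHeight H Δ y l)

/-- Communication height between two states. -/
noncomputable def commHeight {S : Type*} (H : S → ℝ) (Δ : S → S → ℝ) (x y : S) : ℝ :=
  sInf {c | ∃ l : List S,
    (x :: l).getLast (List.cons_ne_nil x l) = y ∧ c = pathHeight H Δ x l}

/-- Communication height between a state and a set. -/
noncomputable def commSet {S : Type*} (H : S → ℝ) (Δ : S → S → ℝ) (x : S) (A : Set S) : ℝ :=
  sInf (commHeight H Δ x '' A)

/-- The states with energy strictly below that of `x`. -/
def Ibelow {S : Type*} (H : S → ℝ) (x : S) : Set S := {y | H y < H x}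

/-- Stability level of a state. -/
noncomputable def stabLevel {S : Type*} (H : S → ℝ) (Δ : S → S → ℝ) (x : S) : ℝ :=
  commSet H Δ x (Ibelow H x) - H x

/-- Ground states: global minima of the energy. -/
def stableSet {S : Type*} (H : S → ℝ) : Set S := {x | ∀ y, H x ≤ H y}

/-- Maximal stability level among non-stable states. -/
noncomputable def gammaM {S : Type*} (H : S → ℝ) (Δ : S → S → ℝ) : ℝ :=
  sSup (stabLevel H Δ '' (stableSet H)ᶜ)

/-- Metastable states: non-stable states attaining the maximal stability level. -/
def metaSet {S : Type*} (H : S → ℝ) (Δ : S → S → ℝ) : Set S :=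
  {x | x ∉ stableSet H ∧ stabLevel H Δ x = gammaM H Δ}

/-!
For a metastable `x`, the ground state `x₀` lies below `x`, so `Φ(x, x₀) - H(x)` is at least the
stability level `V_x = Γ_m`. Conversely, every non-stable state `y` reaches a strictly lower state
at height at most `Γ_m + H(y)`; iterating this descent from `x` (it terminates because `S` is
finite) ends in `x₀`, and since `Φ` satisfies the ultrametric inequality
`Φ(x, z) ≤ max (Φ(x, y)) (Φ(y, z))`, the whole descent stays below `Γ_m + H(x)`.
-/

section CommHeight

variable {S : Type*} {H : S → ℝ} {Δ : S → S → ℝ}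

lemma pathHeight_mem_range (x : S) (l : List S) :
    pathHeight H Δ x l ∈ Set.range H ∪ Set.range (fun p : S × S => H p.1 + Δ p.1 p.2) := by
  induction l generalizing x with
  | nil => exact Or.inl ⟨x, rfl⟩
  | cons y t ih =>
    rcases max_choice (H x + Δ x y) (pathHeight H Δ y t) with h | h
    · rw [pathHeight, h]; exact Or.inr ⟨(x, y), rfl⟩
    · rw [pathHeight, h]; exact ih y

lemma pathHeight_append_le {x y : S} {l₁ : List S}
    (h : (x :: l₁).getLast (List.cons_ne_nil x l₁) = y) (l₂ : List S) :
    pathHeight H Δ x (l₁ ++ l₂) ≤ max (pathHeight H Δ x l₁) (pathHeight H Δ y l₂) := by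
  induction l₁ generalizing x with
  | nil =>
    obtain rfl : x = y := h
    exact le_max_right _ _
  | cons a t ih =>
    rw [List.getLast_cons (List.cons_ne_nil a t)] at h
    simp only [List.cons_append, pathHeight]
    rw [max_assoc]
    exact max_le_max le_rfl (ih h)

lemma getLast_cons_append {x y z : S} {l₁ l₂ : List S}
    (h₁ : (x :: l₁).getLast (List.cons_ne_nil x l₁) = y)
    (h₂ : (y :: l₂).getLast (List.cons_ne_nil y l₂) = z) :
    (x :: (l₁ ++ l₂)).getLast (List.cons_ne_nil _ _) = z := by
  cases l₂ with
  | nil => simp_all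
  | cons b t =>
    rw [List.getLast_cons (List.cons_ne_nil b t)] at h₂
    simp only [← List.cons_append]
    rw [List.getLast_append_of_ne_nil _ (List.cons_ne_nil b t), h₂]

variable [Finite S]

lemma finite_pathHeights (x y : S) :
    {c | ∃ l : List S,
      (x :: l).getLast (List.cons_ne_nil x l) = y ∧ c = pathHeight H Δ x l}.Finite :=
  ((Set.finite_range H).union (Set.finite_range _)).subset
    (by rintro c ⟨l, -, rfl⟩; exact pathHeight_mem_range x l)

lemma exists_pathHeight_eq_commHeight (x y : S) :
    ∃ l : List S, (x :: l).getLast (List.cons_ne_nil x l) = y ∧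
      commHeight H Δ x y = pathHeight H Δ x l :=
  Set.Nonempty.csInf_mem (by exact ⟨_, [y], rfl, rfl⟩) (finite_pathHeights x y)

lemma commHeight_le_pathHeight {x y : S} {l : List S}
    (h : (x :: l).getLast (List.cons_ne_nil x l) = y) :
    commHeight H Δ x y ≤ pathHeight H Δ x l :=
  csInf_le (finite_pathHeights x y).bddBelow ⟨l, h, rfl⟩

lemma commHeight_le_max (x y z : S) :
    commHeight H Δ x z ≤ max (commHeight H Δ x y) (commHeight H Δ y z) := by
  obtain ⟨l₁, h₁, e₁⟩ := exists_pathHeight_eq_commHeight (H := H) (Δ := Δ) x y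
  obtain ⟨l₂, h₂, e₂⟩ := exists_pathHeight_eq_commHeight (H := H) (Δ := Δ) y z
  rw [e₁, e₂]
  exact (commHeight_le_pathHeight (getLast_cons_append h₁ h₂)).trans
    (pathHeight_append_le h₁ l₂)

lemma exists_commHeight_eq_commSet {x : S} {A : Set S} (hA : A.Nonempty) :
    ∃ y ∈ A, commHeight H Δ x y = commSet H Δ x A :=
  (hA.image _).csInf_mem (A.toFinite.image _)

lemma commSet_le_commHeight {x y : S} {A : Set S} (hy : y ∈ A) :
    commSet H Δ x A ≤ commHeight H Δ x y :=
  csInf_le (A.toFinite.image _).bddBelow (Set.mem_image_of_mem _ hy)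

end CommHeight

section Metastability

variable {S : Type*} {H : S → ℝ} {Δ : S → S → ℝ}

lemma notMem_stableSet_iff {x : S} : x ∉ stableSet H ↔ ∃ y, H y < H x := by
  simp [stableSet]

lemma mem_Ibelow_of_mem_stableSet {x x₀ : S} (hx₀ : x₀ ∈ stableSet H) (hx : x ∉ stableSet H) :
    x₀ ∈ Ibelow H x :=
  let ⟨_, hy⟩ := notMem_stableSet_iff.mp hx
  (hx₀ _).trans_lt hy

variable [Finite S]

lemma stabLevel_le_gammaM {x : S} (hx : x ∉ stableSet H) : stabLevel H Δ x ≤ gammaM H Δ :=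
  le_csSup (((stableSet H)ᶜ.toFinite.image _).bddAbove) ⟨x, hx, rfl⟩

lemma commHeight_le_gammaM_add {x₀ : S} (hS : stableSet H = {x₀}) {x : S}
    (hx : x ∉ stableSet H) : commHeight H Δ x x₀ ≤ gammaM H Δ + H x := by
  have : IsTrans S (H · < H ·) := ⟨fun _ _ _ => lt_trans⟩
  have : Std.Irrefl (H · < H · : S → S → Prop) := ⟨fun a => lt_irrefl (H a)⟩
  induction x using (Finite.wellFounded_of_trans_of_irrefl (H · < H ·)).induction with
  | _ x ih =>
    obtain ⟨y, hy, hxy⟩ := exists_commHeight_eq_commSet (Δ := Δ) (x := x)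
      ⟨x₀, mem_Ibelow_of_mem_stableSet (hS ▸ rfl) hx⟩
    have hstep : commHeight H Δ x y ≤ gammaM H Δ + H x := by
      have := stabLevel_le_gammaM (Δ := Δ) hx
      rw [stabLevel, ← hxy] at this
      linarith
    by_cases hy₀ : y = x₀
    · exact hy₀ ▸ hstep
    have hys : y ∉ stableSet H := by rw [hS]; exact hy₀
    calc commHeight H Δ x x₀ ≤ max (commHeight H Δ x y) (commHeight H Δ y x₀) :=
          commHeight_le_max x y x₀
      _ ≤ gammaM H Δ + H x :=
          max_le hstep ((ih y hy hys).trans (by linarith [show H y < H x from hy]))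

lemma commHeight_sub_eq_gammaM_of_mem_metaSet {x₀ : S} (hS : stableSet H = {x₀}) {x : S}
    (hx : x ∈ metaSet H Δ) : commHeight H Δ x x₀ - H x = gammaM H Δ := by
  obtain ⟨hns, hsl⟩ := hx
  have lower : commSet H Δ x (Ibelow H x) ≤ commHeight H Δ x x₀ :=
    commSet_le_commHeight (mem_Ibelow_of_mem_stableSet (hS ▸ rfl) hns)
  have upper := commHeight_le_gammaM_add (Δ := Δ) hS hns
  rw [stabLevel] at hsl
  linarith

end Metastability

theorem comm_cost_to_stable_eq_gammaM_general {S : Type*} [Fintype S]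
    (H : S → ℝ) (Δ : S → S → ℝ)
    (n : ℕ) (x₀ x₂ : S) (x₁ : Fin n → S)
    (hS : stableSet H = {x₀})
    (hM : metaSet H Δ = insert x₂ (Set.range x₁)) :
    commHeight H Δ x₂ x₀ - H x₂ = gammaM H Δ ∧
    ∀ r, commHeight H Δ (x₁ r) x₀ - H (x₁ r) = gammaM H Δ := by
  refine ⟨commHeight_sub_eq_gammaM_of_mem_metaSet hS ?_,
    fun r => commHeight_sub_eq_gammaM_of_mem_metaSet hS ?_⟩
  · rw [hM]; exact Set.mem_insert _ _
  · rw [hM]; exact Set.mem_insert_of_mem _ ⟨r, rfl⟩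

/-- Under the degenerate series condition, the communication cost from `x₂` to `x₀`
and from each `x₁ r` to `x₀` equals `Γ_m`. -/
theorem comm_cost_to_stable_eq_gammaM {S : Type*} [Fintype S]
    (H : S → ℝ) (Δ : S → S → ℝ)
    (hΔ : ∀ x y, 0 ≤ Δ x y) (hrev : ∀ x y, H x + Δ x y = H y + Δ y x)
    (n : ℕ) (hn : 1 ≤ n) (x₀ x₂ : S) (x₁ : Fin n → S)
    (hinj : Function.Injective x₁)
    (hS : stableSet H = {x₀})
    (hM : metaSet H Δ = insert x₂ (Set.range x₁))
    (hE2 : ∀ r, H (x₁ r) < H x₂)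
    (hEq : ∀ r q, H (x₁ r) = H (x₁ q))
    (hBar : ∀ r q, commHeight H Δ (x₁ r) (x₁ q) - H (x₁ r) < gammaM H Δ) :
    commHeight H Δ x₂ x₀ - H x₂ = gammaM H Δ ∧
    ∀ r, commHeight H Δ (x₁ r) x₀ - H (x₁ r) = gammaM H Δ :=
  comm_cost_to_stable_eq_gammaM_general H Δ n x₀ x₂ x₁ hS hM
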